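/- arXiv:1108.6015 — 2 statements merged into one kernel-verified Lean document; each statement's English description precedes it below -/
import Mathlib

section
/- For all t ≥ 3, B_t − B_{t−1} < B*_{t+1} < B_t, where B_n is the n-th Bell number and B*_{t+1} counts partitions of a (t+1)-set without singletons. -/
open Finset Polynomial

/-- Stirling number of the second kind. -/
noncomputable def Stirling (n k : ℕ) : ℕ :=
  Set.ncard {P : Finpartition (Finset.univ : Finset (Fin n)) | P.parts.card = k}

noncomputable def Bell (n : ℕ) : ℕ :=
  Set.ncard (Set.univ : Set (Finpartition (Finset.univ : Finset (Fin n))))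

noncomputable def SStar (n k : ℕ) : ℕ :=
  Set.ncard {P : Finpartition (Finset.univ : Finset (Fin n)) |
    P.parts.card = k ∧ ∀ p ∈ P.parts, 2 ≤ p.card}

noncomputable def BellStar (n : ℕ) : ℕ :=
  Set.ncard {P : Finpartition (Finset.univ : Finset (Fin n)) |
    ∀ p ∈ P.parts, 2 ≤ p.card}


/-! The identity `B_n = B*_n + B*_{n+1}` does all the work. Deleting the point `n` from a
singleton-free partition of `{0, …, n}` and breaking the rest of its block into singletons is a
bijection onto the partitions of `{0, …, n - 1}` having a singleton; the inverse merges all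
singletons with the new point `n`. Hence `B_t − B_{t−1} = B*_{t+1} − B*_{t−1}` and
`B_t − B*_{t+1} = B*_t`, and both bounds reduce to `0 < B*_m` for `m ≥ 2`. -/

namespace Finpartition

variable {α : Type*} [Fintype α] [DecidableEq α] {P Q : Finpartition (univ : Finset α)}

theorem part_eq_part_iff_mem {a b : α} : P.part a = P.part b ↔ a ∈ P.part b :=
  (P.mem_part_iff_part_eq_part (mem_univ a) (mem_univ b)).symm

theorem mem_parts_iff_exists_part_eq {p : Finset α} : p ∈ P.parts ↔ ∃ a, P.part a = p :=
  ⟨fun hp => ⟨_, P.part_eq_of_mem hp (P.nonempty_of_mem_parts hp).choose_spec⟩,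
    fun ⟨a, ha⟩ => ha ▸ P.part_mem.2 (mem_univ a)⟩

theorem ext_of_part_eq_part_iff (h : ∀ a b, P.part a = P.part b ↔ Q.part a = Q.part b) :
    P = Q := by
  have part_eq : ∀ a, P.part a = Q.part a := fun a => by
    ext b; simp only [← part_eq_part_iff_mem, h]
  ext p
  simp only [mem_parts_iff_exists_part_eq, part_eq]

theorem part_eq_singleton_iff {a : α} : P.part a = {a} ↔ ∀ b, P.part b = P.part a → b = a := by
  simp only [part_eq_part_iff_mem]
  exact ⟨fun h b hb => by simpa [h] using hb,
    fun h => eq_singleton_iff_unique_mem.2 ⟨P.mem_part (mem_univ a), h⟩⟩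

theorem two_le_card_part_iff {a : α} : 2 ≤ #(P.part a) ↔ P.part a ≠ {a} :=
  one_lt_card_iff_nontrivial.trans (nontrivial_iff_ne_singleton (P.mem_part (mem_univ a)))

theorem forall_two_le_card_parts_iff : (∀ p ∈ P.parts, 2 ≤ #p) ↔ ∀ a, P.part a ≠ {a} := by
  simp only [mem_parts_iff_exists_part_eq, forall_exists_index, forall_apply_eq_imp_iff,
    two_le_card_part_iff]

theorem part_ofSetoid_ker_eq_iff {β : Type*} (k : α → β) [DecidableRel (Setoid.ker k).r]
    {a b : α} :
    (ofSetoid (Setoid.ker k)).part a = (ofSetoid (Setoid.ker k)).part b ↔ k a = k b := by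
  rw [part_eq_part_iff_mem, mem_part_ofSetoid_iff_rel]
  exact eq_comm

end Finpartition

open Finpartition

section SplitMerge

open scoped Classical

variable {n : ℕ}

/- `splitLastPart P` forgets `Fin.last n` and breaks the rest of its block into singletons;
`mergeSingletons Q` puts all singletons of `Q` into one block together with the new point
`Fin.last n`. Both partitions are the fibres of a key function. -/
def splitKey (P : Finpartition (univ : Finset (Fin (n + 1)))) (a : Fin n) :
    Fin n ⊕ Finset (Fin (n + 1)) :=
  if P.part a.castSucc = P.part (Fin.last n) then .inl a else .inr (P.part a.castSucc)

noncomputable def splitLastPart (P : Finpartition (univ : Finset (Fin (n + 1)))) :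
    Finpartition (univ : Finset (Fin n)) :=
  ofSetoid (Setoid.ker (splitKey P))

def mergeKey (Q : Finpartition (univ : Finset (Fin n))) : Fin (n + 1) → Option (Finset (Fin n)) :=
  Fin.lastCases none fun a => if Q.part a = {a} then none else some (Q.part a)

noncomputable def mergeSingletons (Q : Finpartition (univ : Finset (Fin n))) :
    Finpartition (univ : Finset (Fin (n + 1))) :=
  ofSetoid (Setoid.ker (mergeKey Q))

theorem part_splitLastPart_eq_singleton_iff {P : Finpartition (univ : Finset (Fin (n + 1)))}
    (hP : ∀ x, P.part x ≠ {x}) (a : Fin n) :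
    (splitLastPart P).part a = {a} ↔ P.part a.castSucc = P.part (Fin.last n) := by
  rw [part_eq_singleton_iff]
  simp only [splitLastPart, part_ofSetoid_ker_eq_iff, splitKey]
  constructor
  · intro h
    by_contra hne
    obtain ⟨y, hy, hya⟩ : ∃ y, P.part y = P.part a.castSucc ∧ y ≠ a.castSucc := by
      simpa [part_eq_singleton_iff] using hP a.castSucc
    obtain ⟨b, rfl⟩ | rfl := y.eq_castSucc_or_eq_last
    · grind
    · exact hne hy.symm
  · grind

theorem part_mergeSingletons_eq_part_last_iff {Q : Finpartition (univ : Finset (Fin n))}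
    (a : Fin n) :
    (mergeSingletons Q).part a.castSucc = (mergeSingletons Q).part (Fin.last n) ↔
      Q.part a = {a} := by
  simp [mergeSingletons, part_ofSetoid_ker_eq_iff, mergeKey]

theorem splitLastPart_mergeSingletons (Q : Finpartition (univ : Finset (Fin n))) :
    splitLastPart (mergeSingletons Q) = Q := by
  refine ext_of_part_eq_part_iff fun a b => ?_
  simp only [splitLastPart, part_ofSetoid_ker_eq_iff, splitKey,
    part_mergeSingletons_eq_part_last_iff]
  split_ifs <;> simp [mergeSingletons, part_ofSetoid_ker_eq_iff, mergeKey, *] <;>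
    grind [part_eq_singleton_iff]

theorem mergeSingletons_splitLastPart {P : Finpartition (univ : Finset (Fin (n + 1)))}
    (hP : ∀ x, P.part x ≠ {x}) : mergeSingletons (splitLastPart P) = P := by
  refine ext_of_part_eq_part_iff fun x y => ?_
  simp only [mergeSingletons, part_ofSetoid_ker_eq_iff]
  induction x using Fin.lastCases <;> induction y using Fin.lastCases <;>
    simp only [mergeKey, Fin.lastCases_last, Fin.lastCases_castSucc,
      part_splitLastPart_eq_singleton_iff hP] <;>
    split_ifs <;> simp [splitLastPart, part_ofSetoid_ker_eq_iff, splitKey, *] <;> grind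

theorem exists_part_splitLastPart_eq_singleton {P : Finpartition (univ : Finset (Fin (n + 1)))}
    (hP : ∀ x, P.part x ≠ {x}) : ∃ a, (splitLastPart P).part a = {a} := by
  obtain ⟨y, hy, hy_ne⟩ : ∃ y, P.part y = P.part (Fin.last n) ∧ y ≠ Fin.last n := by
    simpa [part_eq_singleton_iff] using hP (Fin.last n)
  obtain ⟨a, rfl⟩ := Fin.exists_castSucc_eq.2 hy_ne
  exact ⟨a, (part_splitLastPart_eq_singleton_iff hP a).2 hy⟩

theorem part_mergeSingletons_ne_singleton {Q : Finpartition (univ : Finset (Fin n))}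
    (hQ : ∃ a, Q.part a = {a}) (x : Fin (n + 1)) : (mergeSingletons Q).part x ≠ {x} := by
  obtain ⟨a, ha⟩ := hQ
  simp only [Ne, part_eq_singleton_iff, mergeSingletons, part_ofSetoid_ker_eq_iff, not_forall]
  induction x using Fin.lastCases with
  | last => exact ⟨a.castSucc, by simp [mergeKey, ha], (Fin.castSucc_lt_last a).ne⟩
  | cast c =>
    by_cases hc : Q.part c = {c}
    · exact ⟨Fin.last n, by simp [mergeKey, hc], (Fin.castSucc_lt_last c).ne'⟩
    · obtain ⟨d, hd, hdc⟩ : ∃ d, Q.part d = Q.part c ∧ d ≠ c := by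
        simpa [part_eq_singleton_iff] using hc
      have hd_ne : Q.part c ≠ {d} := fun h =>
        hdc (mem_singleton.1 (h ▸ Q.mem_part (mem_univ c))).symm
      exact ⟨d.castSucc, by simp [mergeKey, hc, hd, hd_ne], by simpa using hdc⟩

end SplitMerge

noncomputable def noSingletonsSuccEquivHasSingleton (n : ℕ) :
    {P : Finpartition (univ : Finset (Fin (n + 1))) // ∀ p ∈ P.parts, 2 ≤ #p} ≃
      {Q : Finpartition (univ : Finset (Fin n)) // ¬∀ p ∈ Q.parts, 2 ≤ #p} where
  toFun P := ⟨splitLastPart P.1, by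
    simpa [forall_two_le_card_parts_iff] using
      exists_part_splitLastPart_eq_singleton (forall_two_le_card_parts_iff.1 P.2)⟩
  invFun Q := ⟨mergeSingletons Q.1, forall_two_le_card_parts_iff.2 <|
    part_mergeSingletons_ne_singleton (by simpa [forall_two_le_card_parts_iff] using Q.2)⟩
  left_inv P := Subtype.ext (mergeSingletons_splitLastPart (forall_two_le_card_parts_iff.1 P.2))
  right_inv Q := Subtype.ext (splitLastPart_mergeSingletons Q.1)

theorem bell_eq_bellStar_add_bellStar_succ (n : ℕ) : Bell n = BellStar n + BellStar (n + 1) := by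
  rw [Bell, BellStar, BellStar, Set.ncard_univ,
    ← Set.ncard_add_ncard_compl {P : Finpartition (univ : Finset (Fin n)) | ∀ p ∈ P.parts, 2 ≤ #p}]
  congr 1
  rw [← Nat.card_coe_set_eq, ← Nat.card_coe_set_eq]
  exact Nat.card_congr (noSingletonsSuccEquivHasSingleton n).symm

theorem bellStar_pos {n : ℕ} (hn : 2 ≤ n) : 0 < BellStar n := by
  rw [BellStar, Set.ncard_pos (Set.toFinite _)]
  have hne : (univ : Finset (Fin n)) ≠ ⊥ := (univ_nonempty_iff.2 ⟨⟨0, by omega⟩⟩).ne_empty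
  refine ⟨Finpartition.indiscrete hne, fun p hp => ?_⟩
  simp_all [Finpartition.indiscrete]

/-- For `t ≥ 3`, we have `B_t − B_{t−1} < B*_{t+1} < B_t`. -/
theorem bellStar_bounds (t : ℕ) (ht : 3 ≤ t) :
    Bell t - Bell (t - 1) < BellStar (t + 1) ∧ BellStar (t + 1) < Bell t := by
  obtain ⟨s, rfl⟩ : ∃ s, t = s + 1 := ⟨t - 1, by omega⟩
  have h_bell_succ := bell_eq_bellStar_add_bellStar_succ (s + 1)
  have h_bell := bell_eq_bellStar_add_bellStar_succ s
  have h_pos := bellStar_pos (n := s) (by omega)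
  have h_pos_succ := bellStar_pos (n := s + 1) (by omega)
  have h_pos_succ_succ := bellStar_pos (n := s + 1 + 1) (by omega)
  simp only [Nat.add_sub_cancel]
  omega
end

section
/- For the Stirling numbers of the second kind, the random variable Z_n with P(Z_n = k) = S(n,k)/B_n has expectation E(Z_n) = B_{n+1}/B_n − 1 and variance Var(Z_n) = B_{n+2}/B_n − (B_{n+1}/B_n)² − 1. -/
open Finset Polynomial

/-!
A partition of `insert a s` (with `a ∉ s`) is determined by its restriction `P` to `s` together
with the block of `P` that `a` joins, or the decision that `{a}` is a new block. Hence
`∑_Q f #Q = ∑_P (#P • f #P + f (#P + 1))`, which is the transpose of the recurrence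
`S(n+1,k) = k S(n,k) + S(n,k-1)`. Taking `f = 1` gives `B_{n+1} = ∑_P #P + B_n`, the first
moment; taking `f = id` gives `∑_Q #Q = ∑_P #P² + ∑_P #P + B_n`, and with the first identity at
`n + 1` this yields the second moment `∑_P #P² = B_{n+2} - 2 B_{n+1}`.
-/

def stirlingStep {M : Type*} [AddCommMonoid M] (f : ℕ → M) (k : ℕ) : M := k • f k + f (k + 1)

namespace Finpartition

variable {α : Type*} [DecidableEq α] {s : Finset α} {a : α}

lemma avoid_parts_of_mem_insert_empty (P : Finpartition s) {b : Finset α}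
    (hb : b ∈ insert ∅ P.parts) : (P.avoid b).parts = P.parts.erase b := by
  ext c
  simp only [mem_avoid, mem_erase]
  rcases mem_insert.1 hb with rfl | hb
  · constructor
    · rintro ⟨d, hd, hd0, rfl⟩
      exact ⟨by simpa using hd0, by simpa using hd⟩
    · rintro ⟨hc0, hc⟩
      exact ⟨c, hc, by simpa using hc0, by simp⟩
  · constructor
    · rintro ⟨d, hd, hdb, rfl⟩
      have hdb' : d ≠ b := fun h => hdb (h ▸ le_rfl)
      have hdisj : Disjoint d b := P.disjoint hd hb hdb'
      rw [hdisj.sdiff_eq_left]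
      exact ⟨hdb', hd⟩
    · rintro ⟨hcb, hc⟩
      have hdisj : Disjoint c b := P.disjoint hc hb hcb
      refine ⟨c, hc, fun hle => hcb ?_, hdisj.sdiff_eq_left⟩
      obtain ⟨x, hx⟩ := P.nonempty_of_mem_parts hc
      exact P.eq_of_mem_parts hc hb hx (hle hx)

lemma subset_of_mem_insert_empty (P : Finpartition s) {b : Finset α} (hb : b ∈ insert ∅ P.parts) :
    b ⊆ s :=
  (mem_insert.1 hb).elim (fun h => h ▸ empty_subset s) P.subset

/-- `a` joins the block `b` of `P`; `b = ∅` encodes the new singleton block `{a}`. -/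
def insertInto (P : Finpartition s) (ha : a ∉ s) (b : Finset α) (hb : b ∈ insert ∅ P.parts) :
    Finpartition (insert a s) :=
  (P.avoid b).extend (b := insert a b) (insert_ne_empty a b)
    (disjoint_left.2 fun x hx hxb => by
      rw [mem_sdiff] at hx
      rcases mem_insert.1 hxb with rfl | hxb
      exacts [ha hx.1, hx.2 hxb])
    (by rw [sup_eq_union, union_insert, sdiff_union_of_subset (P.subset_of_mem_insert_empty hb)])

def erasePoint (Q : Finpartition (insert a s)) (ha : a ∉ s) : Finpartition s :=
  (Q.avoid {a}).copy (by rw [sdiff_singleton_eq_erase, erase_insert ha])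

lemma erasePoint_parts (Q : Finpartition (insert a s)) (ha : a ∉ s) :
    (Q.erasePoint ha).parts = (Q.parts.image (·.erase a)).erase ∅ := by
  simp [erasePoint, avoid, sdiff_singleton_eq_erase]

section insertInto

variable (P : Finpartition s) (ha : a ∉ s) {b : Finset α} (hb : b ∈ insert ∅ P.parts)

lemma insertInto_parts : (P.insertInto ha b hb).parts = insert (insert a b) (P.parts.erase b) := by
  rw [insertInto, extend_parts, avoid_parts_of_mem_insert_empty P hb]

lemma card_insertInto_parts :
    #(P.insertInto ha b hb).parts = if b = ∅ then #P.parts + 1 else #P.parts := by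
  rw [insertInto, card_extend, avoid_parts_of_mem_insert_empty P hb]
  split_ifs with hb0
  · rw [hb0, erase_eq_of_notMem P.empty_notMem_parts]
  · have := card_erase_add_one ((mem_insert.1 hb).resolve_left hb0)
    omega

lemma part_insertInto : (P.insertInto ha b hb).part a = insert a b :=
  (P.insertInto ha b hb).part_eq_of_mem (by rw [insertInto_parts]; exact mem_insert_self _ _)
    (mem_insert_self _ _)

lemma erasePoint_insertInto : (P.insertInto ha b hb).erasePoint ha = P := by
  have hab : a ∉ b := fun h => ha (P.subset_of_mem_insert_empty hb h)
  have herase : (P.parts.erase b).image (·.erase a) = P.parts.erase b := by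
    refine (image_congr fun t ht => ?_).trans image_id
    exact erase_eq_of_notMem fun hat => ha (P.subset (mem_of_mem_erase ht) hat)
  ext1
  rw [erasePoint_parts, insertInto_parts, image_insert, erase_insert hab, herase]
  rcases mem_insert.1 hb with rfl | hb
  · rw [erase_insert_eq_erase, erase_idem, erase_eq_of_notMem P.empty_notMem_parts]
  · rw [insert_erase hb, erase_eq_of_notMem P.empty_notMem_parts]

end insertInto

section erasePoint

variable (Q : Finpartition (insert a s)) (ha : a ∉ s)

lemma erase_part_mem_insert_empty : (Q.part a).erase a ∈ insert ∅ (Q.erasePoint ha).parts := by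
  rw [erasePoint_parts, mem_insert, mem_erase, mem_image]
  by_cases h : (Q.part a).erase a = ∅
  · exact Or.inl h
  · exact Or.inr ⟨h, Q.part a, Q.part_mem.2 (mem_insert_self a s), rfl⟩

lemma erasePoint_parts_erase :
    (Q.erasePoint ha).parts.erase ((Q.part a).erase a) = Q.parts.erase (Q.part a) := by
  have hL : Q.part a ∈ Q.parts := Q.part_mem.2 (mem_insert_self a s)
  have hnot : ∀ d ∈ Q.parts, d ≠ Q.part a → a ∉ d := fun d hd hdL had =>
    hdL (Q.part_eq_of_mem hd had).symm
  ext c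
  simp only [erasePoint_parts, mem_erase, mem_image]
  constructor
  · rintro ⟨hcL, -, d, hd, rfl⟩
    have hdL : d ≠ Q.part a := by rintro rfl; exact hcL rfl
    rw [erase_eq_of_notMem (hnot d hd hdL)]
    exact ⟨hdL, hd⟩
  · rintro ⟨hcL, hc⟩
    refine ⟨fun h => hcL ?_, Q.ne_empty hc, c, hc, erase_eq_of_notMem (hnot c hc hcL)⟩
    obtain ⟨x, hx⟩ := Q.nonempty_of_mem_parts hc
    exact Q.eq_of_mem_parts hc hL hx (mem_of_mem_erase (h ▸ hx))

lemma insertInto_erasePoint :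
    (Q.erasePoint ha).insertInto ha _ (Q.erase_part_mem_insert_empty ha) = Q := by
  ext1
  rw [insertInto_parts, insert_erase (Q.mem_part_self.2 (mem_insert_self a s)),
    erasePoint_parts_erase, insert_erase (Q.part_mem.2 (mem_insert_self a s))]

end erasePoint

theorem sum_card_parts_insert {M : Type*} [AddCommMonoid M] (f : ℕ → M) (ha : a ∉ s) :
    ∑ Q : Finpartition (insert a s), f #Q.parts =
      ∑ P : Finpartition s, (#P.parts • f #P.parts + f (#P.parts + 1)) := by
  have hfiber (P : Finpartition s) :
      ∑ b ∈ insert ∅ P.parts, (if b = ∅ then f (#P.parts + 1) else f #P.parts) =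
        #P.parts • f #P.parts + f (#P.parts + 1) := by
    rw [sum_insert P.empty_notMem_parts, if_pos rfl,
      sum_ite_of_false fun b hb => P.ne_empty hb, sum_const, add_comm]
  calc ∑ Q : Finpartition (insert a s), f #Q.parts
      = ∑ x ∈ univ.sigma fun P : Finpartition s => insert ∅ P.parts,
          (if x.2 = ∅ then f (#x.1.parts + 1) else f #x.1.parts) := by
        refine (sum_bij' (fun x hx => x.1.insertInto ha x.2 (mem_sigma.1 hx).2)
          (fun Q _ => ⟨Q.erasePoint ha, (Q.part a).erase a⟩) (fun _ _ => mem_univ _)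
          (fun Q _ => mem_sigma.2 ⟨mem_univ _, Q.erase_part_mem_insert_empty ha⟩) ?_
          (fun Q _ => Q.insertInto_erasePoint ha) ?_).symm
        · rintro ⟨P, b⟩ hb
          have hab : a ∉ b := fun h => ha (P.subset_of_mem_insert_empty (mem_sigma.1 hb).2 h)
          simp only [erasePoint_insertInto, part_insertInto, erase_insert hab]
        · rintro ⟨P, b⟩ hb
          rw [card_insertInto_parts, apply_ite f]
    _ = ∑ P : Finpartition s, (#P.parts • f #P.parts + f (#P.parts + 1)) := by
        rw [sum_sigma]
        exact sum_congr rfl fun P _ => hfiber P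

/-- The right side depends on `s` only through `#s`; this is how the recursion over `insert a s`
reaches `Fin (n + 1)`, which is not of that form. -/
theorem sum_card_parts_eq_iterate {M : Type*} [AddCommMonoid M] (s : Finset α) (f : ℕ → M) :
    ∑ P : Finpartition s, f #P.parts = stirlingStep^[#s] f 0 := by
  induction s using Finset.induction_on generalizing f with
  | empty =>
    have : Unique (Finpartition (∅ : Finset α)) :=
      inferInstanceAs (Unique (Finpartition (⊥ : Finset α)))
    rw [univ_unique, sum_singleton,
      (default : Finpartition (∅ : Finset α)).parts_eq_empty_iff.2 rfl, card_empty, card_empty,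
      Function.iterate_zero_apply]
  | insert a s ha ih =>
    rw [sum_card_parts_insert f ha, card_insert_of_notMem ha, Function.iterate_succ_apply, ← ih]
    rfl

end Finpartition

abbrev SetPartition (n : ℕ) := Finpartition (univ : Finset (Fin n))

theorem SetPartition.sum_card_parts_succ {M : Type*} [AddCommMonoid M] (n : ℕ) (f : ℕ → M) :
    ∑ Q : SetPartition (n + 1), f #Q.parts = ∑ P : SetPartition n, stirlingStep f #P.parts := by
  simp only [Finpartition.sum_card_parts_eq_iterate, card_univ, Fintype.card_fin,
    Function.iterate_succ_apply]

section Bell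

variable (n : ℕ)

theorem bell_eq_card : Bell n = Fintype.card (SetPartition n) := by
  rw [Bell, Set.ncard_univ, Nat.card_eq_fintype_card]

theorem stirling_eq_card_filter (k : ℕ) : Stirling n k = #{P : SetPartition n | #P.parts = k} := by
  rw [Stirling, ← Set.ncard_coe_finset, coe_filter]
  simp only [mem_univ, true_and]

theorem sum_mul_stirling_div_bell (g : ℕ → ℝ) :
    ∑ k ∈ range (n + 1), g k * ((Stirling n k : ℝ) / Bell n) =
      (∑ P : SetPartition n, g #P.parts) / Bell n := by
  have hmaps : ∀ P ∈ (univ : Finset (SetPartition n)), #P.parts ∈ range (n + 1) := fun P _ =>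
    mem_range_succ_iff.2 (P.card_parts_le_card.trans (card_univ.trans (Fintype.card_fin n)).le)
  simp only [mul_div_assoc', ← sum_div, ← sum_fiberwise_of_maps_to hmaps, stirling_eq_card_filter]
  congr 1
  refine sum_congr rfl fun k _ => ?_
  rw [sum_congr rfl fun P hP => congrArg g (mem_filter.1 hP).2, sum_const, nsmul_eq_mul, mul_comm]

theorem sum_card_parts_eq_bell : ∑ P : SetPartition n, (#P.parts : ℝ) = Bell (n + 1) - Bell n := by
  have h := SetPartition.sum_card_parts_succ n fun _ => (1 : ℝ)
  simp only [stirlingStep, sum_const, card_univ, ← bell_eq_card, nsmul_one, sum_add_distrib] at h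
  rw [h]
  ring

theorem sum_sq_card_parts_eq_bell :
    ∑ P : SetPartition n, (#P.parts : ℝ) ^ 2 = Bell (n + 2) - 2 * Bell (n + 1) := by
  have h := SetPartition.sum_card_parts_succ n fun k => (k : ℝ)
  simp only [stirlingStep, nsmul_eq_mul, sum_add_distrib, Nat.cast_add, Nat.cast_one, sum_const,
    card_univ, ← bell_eq_card, ← sq] at h
  rw [sum_card_parts_eq_bell, sum_card_parts_eq_bell] at h
  linarith

end Bell

/-- For the Stirling numbers of the second kind, the random variable `Z_n` with
`P(Z_n = k) = S(n,k)/B_n` has expectation `B_{n+1}/B_n − 1` and variance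
`B_{n+2}/B_n − (B_{n+1}/B_n)² − 1`. -/
theorem stirling_expectation_variance (n : ℕ) (E V : ℝ)
    (hE : E = ∑ k ∈ Finset.range (n + 1), (k : ℝ) * ((Stirling n k : ℝ) / (Bell n : ℝ)))
    (hV : V = ∑ k ∈ Finset.range (n + 1),
      ((k : ℝ) - E) ^ 2 * ((Stirling n k : ℝ) / (Bell n : ℝ))) :
    E = (Bell (n + 1) : ℝ) / (Bell n : ℝ) - 1 ∧
    V = (Bell (n + 2) : ℝ) / (Bell n : ℝ) - ((Bell (n + 1) : ℝ) / (Bell n : ℝ)) ^ 2 - 1 := by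
  have hB : (Bell n : ℝ) ≠ 0 := by
    rw [bell_eq_card]
    exact_mod_cast Fintype.card_ne_zero
  have hE' : E = (Bell (n + 1) - Bell n) / Bell n := by
    rw [hE, sum_mul_stirling_div_bell, sum_card_parts_eq_bell]
  have hV' : V = (∑ P : SetPartition n, (#P.parts : ℝ) ^ 2 -
      2 * E * ∑ P : SetPartition n, (#P.parts : ℝ) + Bell n * E ^ 2) / Bell n := by
    rw [hV, sum_mul_stirling_div_bell]
    simp only [sub_sq, sum_add_distrib, sum_sub_distrib, ← sum_mul, ← mul_sum, sum_const,
      card_univ, ← bell_eq_card, nsmul_eq_mul]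
    ring
  rw [hV', sum_sq_card_parts_eq_bell, sum_card_parts_eq_bell, hE']
  constructor
  · field_simp
  · field_simp
    ring
end
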